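/- Let b be an odd natural number and k ≥ 1. Then the k-th iterate of the Syracuse map applied to 4^{k+1}·b + 1 equals 4·3^k·b + 1. -/
import Mathlib


/-- The Syracuse map: next odd number in the Collatz orbit. -/
def syr (n : ℕ) : ℕ := (3 * n + 1) / 2 ^ padicValNat 2 (3 * n + 1)

lemma syr_step (b i j : ℕ) (hi : 1 ≤ i) :
    syr (4 ^ (i + 1) * 3 ^ j * b + 1) = 4 ^ i * 3 ^ (j + 1) * b + 1 := by
  set m := 4 ^ i * 3 ^ (j + 1) * b + 1 with hm_def
  have hmodd : Odd m := by
    apply Even.add_one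
    obtain ⟨i', rfl⟩ := Nat.exists_eq_add_of_le hi
    have : (4 : ℕ) ^ (1 + i') * 3 ^ (j + 1) * b = 2 * (2 * 4 ^ i' * 3 ^ (j + 1) * b) := by
      rw [pow_add]; ring
    rw [this]
    exact even_two_mul _
  have key : 3 * (4 ^ (i + 1) * 3 ^ j * b + 1) + 1 = 2 ^ 2 * m := by
    rw [hm_def, pow_succ 4 i, pow_succ 3 j]; ring
  have hfact : Fact (Nat.Prime 2) := ⟨Nat.prime_two⟩
  have hm0 : m ≠ 0 := by positivity
  have hval : padicValNat 2 (2 ^ 2 * m) = 2 := by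
    rw [padicValNat.mul (by positivity) hm0, padicValNat.prime_pow,
      padicValNat.eq_zero_of_not_dvd (by
        intro h
        exact (Nat.not_odd_iff_even.mpr (even_iff_two_dvd.mpr h)) hmodd)]
  rw [syr, key, hval, Nat.mul_div_cancel_left _ (by norm_num : (0:ℕ) < 2 ^ 2)]

lemma syr_iter (b : ℕ) (t : ℕ) : ∀ i j, 1 ≤ i →
    syr^[t] (4 ^ (i + t) * 3 ^ j * b + 1) = 4 ^ i * 3 ^ (j + t) * b + 1 := by
  induction t with
  | zero => intro i j hi; simp
  | succ t ih =>
    intro i j hi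
    rw [Function.iterate_succ_apply]
    have h1 : i + (t + 1) = (i + t) + 1 := by ring
    rw [h1, syr_step b (i + t) j (by omega), ih i (j + 1) hi]
    ring_nf

theorem stmt_10 (b k : ℕ) (hb : Odd b) (hk : 1 ≤ k) :
    syr^[k] (4 ^ (k + 1) * b + 1) = 4 * 3 ^ k * b + 1 := by
  have := syr_iter b k 1 0 le_rfl
  simpa [add_comm 1 k] using this
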